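/- Let α, μ > 0 and δ > 0. Then the Laplace transform of the α-μ SNR density satisfies: γ̄^{αμ/2} · ∫₀^∞ exp(−δ·γ) · f_{γ̄}(γ) dγ tends to (α·μ^μ·Γ(αμ/2)) / (2·Γ(μ)·δ^{αμ/2}) as γ̄ → ∞. Consequently, the average symbol error probability of an ideal system with exponential-type SEP H(γ) = Σ_n θ_n·exp(−δ_n·γ) satisfies the high-SNR asymptote (α·Γ(αμ/2)·μ^μ/(2·Γ(μ))) · Σ_n θ_n·(δ_n·γ̄)^{−αμ/2}. -/

import Mathlib

open Real MeasureTheory Filter Topology Finset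

/-- The α-μ SNR probability density function. -/
noncomputable def alphaMuDensity (α μ γbar γ : ℝ) : ℝ :=
  if γ ≤ 0 then 0
  else (α * μ ^ μ) / (2 * Real.Gamma μ * γbar ^ (α * μ / 2)) * γ ^ (α * μ / 2 - 1) *
    Real.exp (-μ * (γ / γbar) ^ (α / 2))

/-!
After multiplying the density by `γ̄^{αμ/2}`, the only dependence on `γ̄` left is the factor
`exp(-μ (γ/γ̄)^{α/2})`, which lies in `(0, 1]` and tends to `1` pointwise. Dominated convergence against the Gamma-type
weight `γ^{αμ/2-1} e^{-δγ}` turns the Laplace integral into `Γ(αμ/2) / δ^{αμ/2}`. The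
exponential-sum case follows by linearity.
-/

section ExpNegRpowDiv

variable {μ β : ℝ}

lemma exp_neg_mul_rpow_le_one (hμ : 0 ≤ μ) {x : ℝ} (hx : 0 ≤ x) : exp (-μ * x ^ β) ≤ 1 :=
  exp_le_one_iff.2 <| by nlinarith [rpow_nonneg hx β]

lemma tendsto_exp_neg_mul_div_rpow_atTop (hβ : 0 < β) (x : ℝ) :
    Tendsto (fun b : ℝ => exp (-μ * (x / b) ^ β)) atTop (𝓝 1) := by
  have hdiv : Tendsto (fun b : ℝ => x / b) atTop (𝓝 0) := tendsto_const_nhds.div_atTop tendsto_id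
  have hrpow : Tendsto (fun b : ℝ => (x / b) ^ β) atTop (𝓝 0) := by
    have h := (continuousAt_rpow_const 0 β (Or.inr hβ.le)).tendsto.comp hdiv
    rwa [zero_rpow hβ.ne'] at h
  have h := (continuous_exp.tendsto _).comp (hrpow.const_mul (-μ))
  rwa [mul_zero, exp_zero] at h

variable {g : ℝ → ℝ}

lemma IntegrableOn.mul_exp_neg_mul_div_rpow (hg : IntegrableOn g (Set.Ioi 0)) (hμ : 0 ≤ μ)
    {b : ℝ} (hb : 0 ≤ b) :
    IntegrableOn (fun x => g x * exp (-μ * (x / b) ^ β)) (Set.Ioi 0) := by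
  refine Integrable.mul_bdd (c := 1) hg (Measurable.aestronglyMeasurable (by fun_prop)) ?_
  filter_upwards [self_mem_ae_restrict measurableSet_Ioi] with x hx
  rw [norm_of_nonneg (exp_pos _).le]
  exact exp_neg_mul_rpow_le_one hμ (div_nonneg (le_of_lt hx) hb)

lemma tendsto_setIntegral_mul_exp_neg_mul_div_rpow (hg : IntegrableOn g (Set.Ioi 0)) (hμ : 0 ≤ μ)
    (hβ : 0 < β) :
    Tendsto (fun b : ℝ => ∫ x in Set.Ioi 0, g x * exp (-μ * (x / b) ^ β)) atTop
      (𝓝 (∫ x in Set.Ioi 0, g x)) := by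
  refine tendsto_integral_filter_of_dominated_convergence (fun x => ‖g x‖)
    (Eventually.of_forall fun b => hg.aestronglyMeasurable.mul
      (Measurable.aestronglyMeasurable (by fun_prop))) ?_ hg.norm ?_
  · filter_upwards [eventually_ge_atTop 0] with b hb
    filter_upwards [self_mem_ae_restrict measurableSet_Ioi] with x hx
    rw [norm_mul, norm_of_nonneg (exp_pos _).le]
    exact mul_le_of_le_one_right (norm_nonneg _)
      (exp_neg_mul_rpow_le_one hμ (div_nonneg (le_of_lt hx) hb))
  · exact ae_of_all _ fun x => by
      simpa using (tendsto_exp_neg_mul_div_rpow_atTop (μ := μ) hβ x).const_mul (g x)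

end ExpNegRpowDiv

lemma integrableOn_rpow_sub_one_mul_exp_neg_mul {a r : ℝ} (ha : 0 < a) (hr : 0 < r) :
    IntegrableOn (fun t : ℝ => t ^ (a - 1) * exp (-(r * t))) (Set.Ioi 0) :=
  .of_integral_ne_zero <| by
    rw [integral_rpow_mul_exp_neg_mul_Ioi ha hr]
    exact mul_ne_zero (by positivity) (Gamma_pos_of_pos ha).ne'

section AlphaMu

variable {α μ δ γbar : ℝ}

lemma exp_neg_mul_mul_alphaMuDensity {γ : ℝ} (hγ : 0 < γ) :
    exp (-δ * γ) * alphaMuDensity α μ γbar γ =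
      α * μ ^ μ / (2 * Gamma μ * γbar ^ (α * μ / 2)) *
        (γ ^ (α * μ / 2 - 1) * exp (-(δ * γ)) * exp (-μ * (γ / γbar) ^ (α / 2))) := by
  rw [alphaMuDensity, if_neg hγ.not_ge, neg_mul]
  ring

lemma integrableOn_exp_neg_mul_mul_alphaMuDensity (hα : 0 < α) (hμ : 0 < μ) (hδ : 0 < δ)
    (hb : 0 ≤ γbar) :
    IntegrableOn (fun γ => exp (-δ * γ) * alphaMuDensity α μ γbar γ) (Set.Ioi 0) := by
  refine IntegrableOn.congr_fun (Integrable.const_mul ?_ _)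
    (fun γ hγ => (exp_neg_mul_mul_alphaMuDensity hγ).symm) measurableSet_Ioi
  exact IntegrableOn.mul_exp_neg_mul_div_rpow
    (integrableOn_rpow_sub_one_mul_exp_neg_mul (by positivity) hδ) hμ.le hb

theorem tendsto_rpow_mul_setIntegral_exp_neg_mul_mul_alphaMuDensity (hα : 0 < α) (hμ : 0 < μ)
    (hδ : 0 < δ) :
    Tendsto (fun γbar : ℝ =>
        γbar ^ (α * μ / 2) *
          ∫ γ in Set.Ioi (0 : ℝ), Real.exp (-δ * γ) * alphaMuDensity α μ γbar γ) atTop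
      (𝓝 ((α * μ ^ μ * Real.Gamma (α * μ / 2)) / (2 * Real.Gamma μ * δ ^ (α * μ / 2)))) := by
  have hs : 0 < α * μ / 2 := by positivity
  have hΓ := (Gamma_pos_of_pos hμ).ne'
  have hlim := (tendsto_setIntegral_mul_exp_neg_mul_div_rpow
    (integrableOn_rpow_sub_one_mul_exp_neg_mul hs hδ) hμ.le (half_pos hα)).const_mul
      (α * μ ^ μ / (2 * Gamma μ))
  rw [integral_rpow_mul_exp_neg_mul_Ioi hs hδ] at hlim
  convert hlim.congr' ?_ using 2
  · rw [div_rpow zero_le_one hδ.le, one_rpow]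
    field_simp
  · filter_upwards [eventually_gt_atTop 0] with γbar hb
    rw [setIntegral_congr_fun measurableSet_Ioi fun γ hγ => exp_neg_mul_mul_alphaMuDensity hγ,
      integral_const_mul]
    field_simp [(rpow_pos_of_pos hb _).ne']

lemma setIntegral_sum_exp_neg_mul_mul_alphaMuDensity {ι : Type*} [Fintype ι] (hα : 0 < α)
    (hμ : 0 < μ) (θ δs : ι → ℝ) (hδs : ∀ n, 0 < δs n) (hb : 0 ≤ γbar) :
    ∫ γ in Set.Ioi (0 : ℝ), (∑ n, θ n * exp (-(δs n) * γ)) * alphaMuDensity α μ γbar γ =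
      ∑ n, θ n * ∫ γ in Set.Ioi (0 : ℝ), exp (-(δs n) * γ) * alphaMuDensity α μ γbar γ := by
  simp_rw [Finset.sum_mul, mul_assoc]
  rw [integral_finsetSum _ fun n _ =>
    (integrableOn_exp_neg_mul_mul_alphaMuDensity hα hμ (hδs n) hb).const_mul (θ n)]
  simp_rw [integral_const_mul]

end AlphaMu

theorem stmt_17 (α μ δ : ℝ) (hα : 0 < α) (hμ : 0 < μ) (hδ : 0 < δ) :
    Tendsto (fun γbar : ℝ =>
        γbar ^ (α * μ / 2) *
          ∫ γ in Set.Ioi (0 : ℝ), Real.exp (-δ * γ) * alphaMuDensity α μ γbar γ) atTop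
      (𝓝 ((α * μ ^ μ * Real.Gamma (α * μ / 2)) / (2 * Real.Gamma μ * δ ^ (α * μ / 2)))) ∧
    ∀ (k : ℕ) (θ δs : Fin k → ℝ), (∀ n, 0 < δs n) →
      Tendsto (fun γbar : ℝ =>
          γbar ^ (α * μ / 2) *
            ∫ γ in Set.Ioi (0 : ℝ),
              (∑ n, θ n * Real.exp (-(δs n) * γ)) * alphaMuDensity α μ γbar γ) atTop
        (𝓝 ((α * Real.Gamma (α * μ / 2) * μ ^ μ / (2 * Real.Gamma μ)) *
          ∑ n, θ n * (δs n) ^ (-(α * μ / 2)))) := by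
  refine ⟨tendsto_rpow_mul_setIntegral_exp_neg_mul_mul_alphaMuDensity hα hμ hδ,
    fun k θ δs hδs => ?_⟩
  have hlim := tendsto_finsetSum Finset.univ fun n _ =>
    (tendsto_rpow_mul_setIntegral_exp_neg_mul_mul_alphaMuDensity hα hμ (hδs n)).const_mul (θ n)
  convert hlim.congr' ?_ using 2
  · rw [Finset.mul_sum]
    refine Finset.sum_congr rfl fun n _ => ?_
    rw [rpow_neg (hδs n).le]
    field_simp
  · filter_upwards [eventually_ge_atTop 0] with γbar hb
    rw [setIntegral_sum_exp_neg_mul_mul_alphaMuDensity hα hμ θ δs hδs hb, Finset.mul_sum]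
    refine Finset.sum_congr rfl fun n _ => ?_
    ring
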